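/- Let d, k, a ≥ 1 be integers, let G = (V, E) be a d-uniform hypergraph, and let W be a hitting set of G with |W| ≤ k. Let D ∈ E be an edge such that s_G(C) ≤ ak for every subset C ⊆ D. Then there exists a set A ⊆ V with A ∩ D = ∅ and |A| ≤ k + 2^d · a · k · d such that D is the unique edge of E disjoint from A. -/

import Mathlib

open scoped Classical

/-- The minimum size of a hitting set of the family `F`: a finite set of
vertices intersecting every member of `F`. -/
noncomputable def hsNum {α : Type*} (F : Finset (Finset α)) : ℕ :=
  sInf {n | ∃ H : Finset α, (∀ D ∈ F, ∃ v ∈ H, v ∈ D) ∧ H.card = n}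

/-- `T` is a sunflower with core `C` in the hypergraph with edge set `E`:
a set of edges, each containing `C`, whose pairwise intersections equal `C`. -/
def IsSunflower {α : Type*} [DecidableEq α] (E : Finset (Finset α)) (C : Finset α)
    (T : Finset (Finset α)) : Prop :=
  T ⊆ E ∧ (∀ D ∈ T, C ⊆ D) ∧ ∀ D ∈ T, ∀ D' ∈ T, D ≠ D' → D ∩ D' = C

/-- `sunflowerNum E C` is the maximum number of petals of a sunflower with
core `C` in the hypergraph with edge set `E` (it is `0` if no edge contains `C`). -/
noncomputable def sunflowerNum {α : Type*} [DecidableEq α] (E : Finset (Finset α))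
    (C : Finset α) : ℕ :=
  sSup {n | ∃ T : Finset (Finset α), IsSunflower E C T ∧ T.card = n}

/-!
For every core `C ⊆ D` fix a sunflower with core `C` of maximum size; it has at most `a k`
petals, each of size `d`. Let `A` collect the parts outside `D` of all these petals, so
`|A| ≤ 2^d · a k · d` and `A ∩ D = ∅`. If an edge `D'` avoids `A`, put `C = D' ∩ D`. Then `D'`
meets every petal of the maximum sunflower with core `C` exactly in `C`, so by maximality `D'` is
itself one of its petals; hence `D' \ D ⊆ A`, which forces `D' ⊆ D` and, by uniformity, `D' = D`.
-/

namespace IsSunflower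

variable {α : Type*} [DecidableEq α] {E T : Finset (Finset α)} {C D' : Finset α}

theorem card_le_card_edges (hT : IsSunflower E C T) : T.card ≤ E.card :=
  Finset.card_le_card hT.1

theorem bddAbove_setOf_card (E : Finset (Finset α)) (C : Finset α) :
    BddAbove {n | ∃ T, IsSunflower E C T ∧ T.card = n} := by
  refine ⟨E.card, ?_⟩
  rintro _ ⟨T, hT, rfl⟩
  exact hT.card_le_card_edges

theorem card_le_sunflowerNum (hT : IsSunflower E C T) : T.card ≤ sunflowerNum E C :=
  le_csSup (bddAbove_setOf_card E C) ⟨T, hT, rfl⟩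

theorem insert_of_inter_subset (hT : IsSunflower E C T) (hD' : D' ∈ E) (hCD' : C ⊆ D')
    (hinter : ∀ Y ∈ T, D' ∩ Y ⊆ C) : IsSunflower E C (insert D' T) := by
  have hcore : ∀ Y ∈ T, D' ∩ Y = C := fun Y hY =>
    (hinter Y hY).antisymm (Finset.subset_inter hCD' (hT.2.1 Y hY))
  refine ⟨Finset.insert_subset hD' hT.1, ?_, ?_⟩
  · simpa only [Finset.forall_mem_insert] using ⟨hCD', hT.2.1⟩
  · intro X hX Y hY hXY
    rcases Finset.mem_insert.mp hX with rfl | hXT <;> rcases Finset.mem_insert.mp hY with rfl | hYT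
    · exact absurd rfl hXY
    · exact hcore Y hYT
    · rw [Finset.inter_comm]; exact hcore X hXT
    · exact hT.2.2 X hXT Y hYT hXY

theorem mem_of_card_eq_sunflowerNum (hT : IsSunflower E C T) (hmax : T.card = sunflowerNum E C)
    (hD' : D' ∈ E) (hCD' : C ⊆ D') (hinter : ∀ Y ∈ T, D' ∩ Y ⊆ C) : D' ∈ T := by
  by_contra hnot
  have hle := (hT.insert_of_inter_subset hD' hCD' hinter).card_le_sunflowerNum
  rw [Finset.card_insert_of_notMem hnot, hmax] at hle
  omega

end IsSunflower

theorem exists_isSunflower_card_eq_sunflowerNum {α : Type*} [DecidableEq α]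
    (E : Finset (Finset α)) (C : Finset α) :
    ∃ T, IsSunflower E C T ∧ T.card = sunflowerNum E C :=
  Nat.sSup_mem (s := {n | ∃ T, IsSunflower E C T ∧ T.card = n})
    ⟨0, ∅, ⟨Finset.empty_subset _, by simp, by simp⟩, rfl⟩ (IsSunflower.bddAbove_setOf_card E C)

theorem exists_disjoint_forall_disjoint_eq_of_sunflowerNum_le {α : Type*} [DecidableEq α]
    {d s : ℕ} {E : Finset (Finset α)} (huni : ∀ D' ∈ E, D'.card = d) {D : Finset α} (hD : D ∈ E)
    (hsmall : ∀ C ⊆ D, sunflowerNum E C ≤ s) :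
    ∃ A : Finset α, Disjoint A D ∧ A.card ≤ 2 ^ d * s * d ∧
      ∀ D' ∈ E, Disjoint A D' → D' = D := by
  choose T hT hTmax using exists_isSunflower_card_eq_sunflowerNum E
  set A := D.powerset.biUnion fun C => (T C).biUnion (· \ D) with hA
  have mem_A : ∀ C ⊆ D, ∀ Y ∈ T C, ∀ x ∈ Y, x ∉ D → x ∈ A := fun C hC Y hY x hx hxD => by
    simp only [hA, Finset.mem_biUnion, Finset.mem_powerset, Finset.mem_sdiff]
    exact ⟨C, hC, Y, hY, hx, hxD⟩
  refine ⟨A, ?_, ?_, fun D' hD' hdisj => ?_⟩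
  · simp only [hA, Finset.disjoint_biUnion_left]
    exact fun _ _ _ _ => Finset.sdiff_disjoint
  · have hpetals : ∀ C ⊆ D, ((T C).biUnion (· \ D)).card ≤ s * d := fun C hC =>
      calc ((T C).biUnion (· \ D)).card ≤ ∑ Y ∈ T C, (Y \ D).card := Finset.card_biUnion_le
        _ ≤ ∑ _Y ∈ T C, d := Finset.sum_le_sum fun Y hY =>
            (Finset.card_le_card Finset.sdiff_subset).trans_eq (huni Y ((hT C).1 hY))
        _ = (T C).card * d := by rw [Finset.sum_const, smul_eq_mul]
        _ ≤ s * d := Nat.mul_le_mul_right d ((hTmax C).trans_le (hsmall C hC))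
    calc A.card ≤ ∑ C ∈ D.powerset, ((T C).biUnion (· \ D)).card := Finset.card_biUnion_le
      _ ≤ ∑ _C ∈ D.powerset, s * d :=
          Finset.sum_le_sum fun C hC => hpetals C (Finset.mem_powerset.mp hC)
      _ = 2 ^ d * s * d := by
          rw [Finset.sum_const, smul_eq_mul, Finset.card_powerset, huni D hD, mul_assoc]
  · have hCD : D' ∩ D ⊆ D := Finset.inter_subset_right
    have hpetal : D' ∈ T (D' ∩ D) := by
      refine (hT _).mem_of_card_eq_sunflowerNum (hTmax _) hD' Finset.inter_subset_left
        fun Y hY x hx => ?_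
      rw [Finset.mem_inter] at hx ⊢
      by_contra hxD
      exact Finset.disjoint_left.mp hdisj (mem_A _ hCD Y hY x hx.2 (hxD <| ⟨hx.1, ·⟩)) hx.1
    have hsub : D' ⊆ D := fun x hx => by
      by_contra hxD
      exact Finset.disjoint_left.mp hdisj (mem_A _ hCD D' hpetal x hx hxD) hx
    exact Finset.eq_of_subset_of_card_le hsub ((huni D hD).trans (huni D' hD').symm).le

theorem stmt_10_general {α : Type*} [DecidableEq α] (d k a : ℕ)
    (E : Finset (Finset α)) (huni : ∀ D' ∈ E, D'.card = d)
    (D : Finset α) (hD : D ∈ E)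
    (hsmall : ∀ C ⊆ D, sunflowerNum E C ≤ a * k) :
    ∃ A : Finset α, Disjoint A D ∧ A.card ≤ k + 2 ^ d * a * k * d ∧
      ∀ D' ∈ E, Disjoint A D' → D' = D := by
  obtain ⟨A, hAD, hcard, huniq⟩ :=
    exists_disjoint_forall_disjoint_eq_of_sunflowerNum_le huni hD hsmall
  refine ⟨A, hAD, ?_, huniq⟩
  rw [← mul_assoc (2 ^ d)] at hcard
  omega

theorem stmt_10 {α : Type*} [DecidableEq α] (d k a : ℕ)
    (hd : 1 ≤ d) (hk : 1 ≤ k) (ha : 1 ≤ a)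
    (E : Finset (Finset α)) (huni : ∀ D' ∈ E, D'.card = d)
    (W : Finset α) (hW : ∀ D' ∈ E, ∃ v ∈ W, v ∈ D') (hWcard : W.card ≤ k)
    (D : Finset α) (hD : D ∈ E)
    (hsmall : ∀ C ⊆ D, sunflowerNum E C ≤ a * k) :
    ∃ A : Finset α, Disjoint A D ∧ A.card ≤ k + 2 ^ d * a * k * d ∧
      ∀ D' ∈ E, Disjoint A D' → D' = D :=
  stmt_10_general d k a E huni D hD hsmall
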